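/- arXiv:math/0503394 — 3 statements merged into one kernel-verified Lean document; each statement's English description precedes it below -/
import Mathlib

section
/- Let T be a positive random variable with density f_T and Laplace transform φ(λ) = ∫_0^∞ e^{-λt} f_T(t) dt. Let Γ_n ~ Gamma(n,1) be independent of T and set Y_n = nT/Γ_n. Then the density of Y_n is f_{Y_n}(y) = (1/Γ(n+1)) (n/y)^{n+1} ∫_0^∞ e^{-nt/y} t^n f_T(t) dt = ((-1)^n / n!) (n/y)^{n+1} φ^{(n)}(n/y). -/
open MeasureTheory ProbabilityTheory Set Metric

open scoped ENNReal NNReal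
lemma pow_mul_exp_neg_le {c : ℝ} (hc : 0 < c) (k : ℕ) :
    ∃ C : ℝ, 0 ≤ C ∧ ∀ t : ℝ, 0 < t → t ^ k * Real.exp (-(c * t)) ≤ C := by
  refine ⟨k.factorial / c ^ k, by positivity, fun t ht => ?_⟩
  have hct : (0:ℝ) < c * t := by positivity
  have h1 : (c * t) ^ k / k.factorial ≤ Real.exp (c * t) := by
    calc (c * t) ^ k / k.factorial
        ≤ ∑ i ∈ Finset.range (k + 1), (c * t) ^ i / i.factorial :=
          Finset.single_le_sum (f := fun i => (c*t)^i / i.factorial)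
            (fun i _ => by positivity) (Finset.self_mem_range_succ k)
      _ ≤ Real.exp (c * t) := Real.sum_le_exp_of_nonneg hct.le _
  have h1' : (c * t) ^ k ≤ k.factorial * Real.exp (c * t) := by
    rw [div_le_iff₀ (by positivity : (0:ℝ) < (k.factorial:ℝ))] at h1
    linarith [h1]
  rw [Real.exp_neg, ← div_eq_mul_inv, div_le_div_iff₀ (Real.exp_pos _) (by positivity)]
  calc t ^ k * c ^ k = (c * t) ^ k := by rw [mul_pow]; ring
    _ ≤ k.factorial * Real.exp (c * t) := h1'

lemma lap_integrable {fT : ℝ → ℝ} (hInt : IntegrableOn fT (Ioi 0)) (k : ℕ) {c : ℝ} (hc : 0 < c) :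
    IntegrableOn (fun t => Real.exp (-(c * t)) * t ^ k * fT t) (Ioi 0) := by
  obtain ⟨C, hC0, hC⟩ := pow_mul_exp_neg_le hc k
  have hmeas : AEStronglyMeasurable (fun t => Real.exp (-(c * t)) * t ^ k * fT t)
      (volume.restrict (Ioi 0)) := by
    exact (((Real.continuous_exp.comp (continuous_const.mul continuous_id).neg).mul
      (continuous_pow k)).aestronglyMeasurable).mul hInt.1
  refine Integrable.mono (hInt.norm.const_mul C) hmeas ?_
  filter_upwards [ae_restrict_mem measurableSet_Ioi] with t ht
  have h1 : 0 < t := ht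
  have : |Real.exp (-(c * t)) * t ^ k| ≤ C := by
    rw [abs_of_nonneg (by positivity)]
    calc Real.exp (-(c * t)) * t ^ k = t ^ k * Real.exp (-(c * t)) := by ring
      _ ≤ C := hC t h1
  calc ‖Real.exp (-(c * t)) * t ^ k * fT t‖ = |Real.exp (-(c * t)) * t ^ k| * |fT t| := by
        rw [Real.norm_eq_abs, abs_mul]
    _ ≤ C * |fT t| := by gcongr
    _ ≤ ‖C * ‖fT t‖‖ := le_abs_self _

lemma lap_hasDerivAt {fT : ℝ → ℝ} (hInt : IntegrableOn fT (Ioi 0)) (k : ℕ) {l : ℝ} (hl : 0 < l) :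
    HasDerivAt (fun x => ∫ t in Ioi (0:ℝ), Real.exp (-(x * t)) * t ^ k * fT t)
      (∫ t in Ioi (0:ℝ), -(Real.exp (-(l * t)) * t ^ (k+1) * fT t)) l := by
  obtain ⟨C, hC0, hC⟩ := pow_mul_exp_neg_le (half_pos hl) (k+1)
  have hmeas : ∀ x : ℝ, AEStronglyMeasurable (fun t => Real.exp (-(x * t)) * t ^ k * fT t)
      (volume.restrict (Ioi 0)) := fun x =>
    (((Real.continuous_exp.comp (continuous_const.mul continuous_id).neg).mul
      (continuous_pow k)).aestronglyMeasurable).mul hInt.1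
  have hmeas' : AEStronglyMeasurable (fun t => -(Real.exp (-(l * t)) * t ^ (k+1) * fT t))
      (volume.restrict (Ioi 0)) :=
    ((((Real.continuous_exp.comp (continuous_const.mul continuous_id).neg).mul
      (continuous_pow (k+1))).aestronglyMeasurable).mul hInt.1).neg
  have key := hasDerivAt_integral_of_dominated_loc_of_deriv_le (μ := volume.restrict (Ioi 0))
    (F := fun x t => Real.exp (-(x * t)) * t ^ k * fT t)
    (F' := fun x t => -(Real.exp (-(x * t)) * t ^ (k+1) * fT t))
    (bound := fun t => C * |fT t|) (x₀ := l) (ball_mem_nhds l (half_pos hl))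
    (Filter.Eventually.of_forall fun x => hmeas x) (lap_integrable hInt k hl)
    (hmeas') ?_ (hInt.norm.const_mul C) ?_
  · exact key.2
  · -- bound
    filter_upwards [ae_restrict_mem measurableSet_Ioi] with t ht x hx
    have h1 : (0:ℝ) < t := ht
    have hx2 : l / 2 < x := by
      have := abs_lt.1 (mem_ball_iff_norm.1 hx)
      linarith [this.1]
    have hexp : Real.exp (-(x * t)) ≤ Real.exp (-(l/2 * t)) := by
      apply Real.exp_le_exp.2; nlinarith
    calc ‖-(Real.exp (-(x * t)) * t ^ (k+1) * fT t)‖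
        = Real.exp (-(x * t)) * t ^ (k+1) * |fT t| := by
          rw [norm_neg, Real.norm_eq_abs, abs_mul, abs_mul, abs_of_nonneg (Real.exp_pos _).le,
            abs_of_nonneg (by positivity)]
      _ ≤ (t ^ (k+1) * Real.exp (-(l/2 * t))) * |fT t| := by
          rw [mul_comm (Real.exp _)]; gcongr
      _ ≤ C * |fT t| := by gcongr; exact hC t h1
  · -- differentiability
    filter_upwards [ae_restrict_mem measurableSet_Ioi] with t ht x hx
    have h1 : HasDerivAt (fun x : ℝ => -(x * t)) (-t) x := by
      exact (hasDerivAt_mul_const t).neg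
    have h2 : HasDerivAt (fun x : ℝ => Real.exp (-(x * t))) (Real.exp (-(x * t)) * (-t)) x :=
      (Real.hasDerivAt_exp _).comp x h1
    have h3 := (h2.mul_const (t ^ k)).mul_const (fT t)
    refine h3.congr_deriv ?_
    rw [pow_succ]; ring

lemma lap_iteratedDeriv {fT φ : ℝ → ℝ} (hInt : IntegrableOn fT (Ioi 0))
    (hφ : ∀ lam : ℝ, 0 < lam → φ lam = ∫ t in Ioi (0:ℝ), Real.exp (-lam * t) * fT t) (k : ℕ) :
    ∀ lam : ℝ, 0 < lam → iteratedDeriv k φ lam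
      = (-1:ℝ)^k * ∫ t in Ioi (0:ℝ), Real.exp (-(lam * t)) * t ^ k * fT t := by
  induction k with
  | zero =>
    intro lam h
    rw [iteratedDeriv_zero, hφ lam h]
    simp only [pow_zero, one_mul, mul_one, neg_mul]
  | succ k ih =>
    intro lam h
    have hev : iteratedDeriv k φ =ᶠ[nhds lam]
        fun x => (-1:ℝ)^k * ∫ t in Ioi (0:ℝ), Real.exp (-(x * t)) * t ^ k * fT t := by
      filter_upwards [Ioi_mem_nhds h] with x hx using ih x hx
    rw [iteratedDeriv_succ, hev.deriv_eq]
    have hd := (lap_hasDerivAt hInt k h).const_mul ((-1:ℝ)^k)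
    rw [hd.deriv, integral_neg]
    rw [pow_succ]; ring

lemma lintegral_image_eq_lintegral_abs_deriv_mul {s : Set ℝ} {f f' : ℝ → ℝ} (hs : MeasurableSet s)
    (hf' : ∀ x ∈ s, HasDerivWithinAt f (f' x) s x) (hf : InjOn f s) (g : ℝ → ℝ≥0∞) :
    ∫⁻ x in f '' s, g x = ∫⁻ x in s, ENNReal.ofReal |f' x| * g (f x) := by
  simpa only [ContinuousLinearMap.det_toSpanSingleton] using
    lintegral_image_eq_lintegral_abs_det_fderiv_mul volume hs
      (fun x hx => (hf' x hx).hasFDerivWithinAt) hf g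


lemma density_algebra (m : ℕ) {t y : ℝ} (ht : 0 < t) (hy : 0 < y) (a : ℝ) :
    a * ((((m+1:ℕ):ℝ)*t/y^2) * ((((m+1:ℕ):ℝ)*t/y)^((m+1)-1) * Real.exp (-(((m+1:ℕ):ℝ)*t/y))
        / Real.Gamma ((m+1:ℕ):ℝ))) =
    (1/Real.Gamma (((m+1:ℕ):ℝ)+1) * (((m+1:ℕ):ℝ)/y)^((m+1)+1)) *
      (Real.exp (-(((m+1:ℕ):ℝ)*t)/y) * t^(m+1) * a) := by
  have harg : -(((m+1:ℕ):ℝ)*t)/y = -(((m+1:ℕ):ℝ)*t/y) := by ring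
  rw [harg]
  have hG1 : Real.Gamma ((m+1:ℕ):ℝ) = m.factorial := by
    push_cast
    exact_mod_cast Real.Gamma_nat_eq_factorial m
  have hG2 : Real.Gamma (((m+1:ℕ):ℝ)+1) = (m+1).factorial := by
    exact_mod_cast Real.Gamma_nat_eq_factorial (m+1)
  rw [hG1, hG2]
  have hfac : (((m+1).factorial : ℕ):ℝ) = (m+1) * m.factorial := by
    push_cast [Nat.factorial_succ]; ring
  rw [hfac]
  have hy0 : y ≠ 0 := hy.ne'
  have hm0 : (m.factorial : ℝ) ≠ 0 := Nat.cast_ne_zero.2 m.factorial_ne_zero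
  simp only [Nat.add_sub_cancel]
  push_cast
  simp only [div_pow, mul_pow]
  field_simp
  ring


/-- Real inversion formula for the Laplace transform: if `T > 0` has density `f_T` and
Laplace transform `φ`, and `Γ_n ~ Gamma(n,1)` is independent of `T`, then `Y_n = nT/Γ_n`
has density `f_{Y_n}(y) = (1/Γ(n+1)) (n/y)^{n+1} ∫_0^∞ e^{-nt/y} t^n f_T(t) dt
= ((-1)^n/n!) (n/y)^{n+1} φ^{(n)}(n/y)`. -/
theorem real_inversion_formula {Ω : Type*} [MeasurableSpace Ω] (P : Measure Ω)
    [IsProbabilityMeasure P] (n : ℕ) (hn : 0 < n)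
    (T Γn : Ω → ℝ) (hT : Measurable T) (hΓn : Measurable Γn)
    (fT : ℝ → ℝ)
    (hTdens : ∀ s : Set ℝ, MeasurableSet s →
      (P (T ⁻¹' s)).toReal = ∫ t in s ∩ Ioi (0 : ℝ), fT t)
    (hΓdens : ∀ s : Set ℝ, MeasurableSet s →
      (P (Γn ⁻¹' s)).toReal =
        ∫ x in s ∩ Ioi (0 : ℝ), x ^ (n - 1) * Real.exp (-x) / Real.Gamma n)
    (hindep : IndepFun T Γn P)
    (φ : ℝ → ℝ) (hφ : ∀ lam : ℝ, 0 < lam → φ lam = ∫ t in Ioi (0 : ℝ), Real.exp (-lam * t) * fT t)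
    (fY : ℝ → ℝ)
    (hfY : ∀ y : ℝ, 0 < y →
      fY y = (1 / Real.Gamma (n + 1)) * (n / y) ^ (n + 1) *
        ∫ t in Ioi (0 : ℝ), Real.exp (-(n * t) / y) * t ^ n * fT t) :
    (∀ s : Set ℝ, MeasurableSet s →
      (P ((fun ω => n * T ω / Γn ω) ⁻¹' s)).toReal = ∫ y in s ∩ Ioi (0 : ℝ), fY y) ∧
    (∀ y : ℝ, 0 < y →
      fY y = ((-1 : ℝ) ^ n / n.factorial) * (n / y) ^ (n + 1) * iteratedDeriv n φ (n / y)) := by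
  obtain ⟨m, rfl⟩ : ∃ m, n = m + 1 := ⟨n - 1, (Nat.succ_pred_eq_of_pos hn).symm⟩
  set n := m + 1 with hndef
  -- basic facts about fT
  have h1 : ∫ t in Ioi (0:ℝ), fT t = 1 := by
    have := hTdens univ MeasurableSet.univ
    simpa [preimage_univ, measure_univ, univ_inter] using this.symm
  have hIntT : IntegrableOn fT (Ioi 0) := by
    by_contra hcon
    rw [integral_undef hcon] at h1; norm_num at h1
  have hTnn : 0 ≤ᵐ[volume.restrict (Ioi (0:ℝ))] fT := by
    refine ae_nonneg_of_forall_setIntegral_nonneg hIntT fun s hs _ => ?_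
    rw [Measure.restrict_restrict hs, ← hTdens s hs]
    exact ENNReal.toReal_nonneg
  -- gamma density
  set gam : ℝ → ℝ := fun x => x ^ (n - 1) * Real.exp (-x) / Real.Gamma n with hgamdef
  have hgamcont : Continuous gam :=
    ((continuous_pow _).mul (Real.continuous_exp.comp continuous_neg)).div_const _
  have hΓpos : 0 < Real.Gamma n := by
    apply Real.Gamma_pos_of_pos
    exact_mod_cast hn
  have hgamnn : ∀ x : ℝ, 0 < x → 0 ≤ gam x := fun x hx => by
    rw [hgamdef]
    positivity
  have h2 : ∫ x in Ioi (0:ℝ), gam x = 1 := by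
    have := hΓdens univ MeasurableSet.univ
    simpa [preimage_univ, measure_univ, univ_inter] using this.symm
  have hIntG : IntegrableOn gam (Ioi 0) := by
    by_contra hcon
    rw [integral_undef hcon] at h2; norm_num at h2
  -- measurable representative of fT
  obtain ⟨FT, hFTmeas, hFTeq⟩ : ∃ FT : ℝ → ℝ, Measurable FT ∧
      fT =ᵐ[volume.restrict (Ioi (0:ℝ))] FT := by
    obtain ⟨FT, h1', h2'⟩ := hIntT.1.aemeasurable
    exact ⟨FT, h1', h2'⟩
  have hFTnn : 0 ≤ᵐ[volume.restrict (Ioi (0:ℝ))] FT := by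
    filter_upwards [hTnn, hFTeq] with t h1' h2'; rw [← h2']; exact h1'
  -- laws as densities
  have hmapT : P.map T
      = (volume.restrict (Ioi (0:ℝ))).withDensity (fun t => ENNReal.ofReal (FT t)) := by
    ext s hs
    rw [Measure.map_apply hT hs, withDensity_apply _ hs, Measure.restrict_restrict hs,
      ← ENNReal.ofReal_toReal (measure_ne_top P _), hTdens s hs,
      ofReal_integral_eq_lintegral_ofReal (hIntT.mono_set inter_subset_right)
        (ae_restrict_of_ae_restrict_of_subset inter_subset_right hTnn)]
    exact lintegral_congr_ae
      ((ae_restrict_of_ae_restrict_of_subset inter_subset_right hFTeq).mono fun x hx => by simp only [hx])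
  have hmapG : P.map Γn
      = (volume.restrict (Ioi (0:ℝ))).withDensity (fun x => ENNReal.ofReal (gam x)) := by
    have hgnn : 0 ≤ᵐ[volume.restrict (Ioi (0:ℝ))] gam := by
      filter_upwards [ae_restrict_mem measurableSet_Ioi] with x hx using hgamnn x hx
    ext s hs
    rw [Measure.map_apply hΓn hs, withDensity_apply _ hs, Measure.restrict_restrict hs,
      ← ENNReal.ofReal_toReal (measure_ne_top P _), hΓdens s hs,
      ofReal_integral_eq_lintegral_ofReal (hIntG.mono_set inter_subset_right)
        (ae_restrict_of_ae_restrict_of_subset inter_subset_right hgnn)]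
  have hjoint : P.map (fun ω => (T ω, Γn ω)) = (P.map T).prod (P.map Γn) :=
    (indepFun_iff_map_prod_eq_prod_map_map hT.aemeasurable hΓn.aemeasurable).1 hindep
  have hprobG : IsProbabilityMeasure (P.map Γn) := Measure.isProbabilityMeasure_map hΓn.aemeasurable
  -- measurable version of fY
  set F : ℝ → ℝ := fun y => (1 / Real.Gamma (n + 1)) * ((n:ℝ) / y) ^ (n + 1) *
      (∫⁻ t in Ioi (0:ℝ), ENNReal.ofReal (Real.exp (-((n:ℝ) * t) / y) * t ^ n * FT t)).toReal
    with hFdef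
  have hker : Measurable fun p : ℝ × ℝ =>
      ENNReal.ofReal (Real.exp (-((n:ℝ) * p.2) / p.1) * p.2 ^ n * FT p.2) := by
    apply ENNReal.measurable_ofReal.comp
    exact ((Real.measurable_exp.comp
      (((measurable_const.mul measurable_snd).neg).div measurable_fst)).mul
      (measurable_snd.pow_const n)).mul (hFTmeas.comp measurable_snd)
  have hFmeas : Measurable F := by
    apply (measurable_const.mul ((measurable_const.div measurable_id).pow_const (n+1))).mul
    exact (Measurable.lintegral_prod_right' (f := fun p : ℝ × ℝ =>
      ENNReal.ofReal (Real.exp (-((n:ℝ) * p.2) / p.1) * p.2 ^ n * FT p.2) ) hker).ennreal_toReal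
  have hintnn : ∀ y : ℝ, 0 < y → 0 ≤ᵐ[volume.restrict (Ioi (0:ℝ))]
      fun t => Real.exp (-((n:ℝ) * t) / y) * t ^ n * fT t := by
    intro y hy
    filter_upwards [hTnn, ae_restrict_mem measurableSet_Ioi] with t h1' h2'
    have ht0 : (0:ℝ) < t := h2'
    exact mul_nonneg (mul_nonneg (Real.exp_pos _).le (pow_nonneg ht0.le n)) h1'
  have hintmeas : ∀ y : ℝ, AEStronglyMeasurable
      (fun t => Real.exp (-((n:ℝ) * t) / y) * t ^ n * fT t)
      (volume.restrict (Ioi (0:ℝ))) := fun y =>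
    (((Real.continuous_exp.comp ((continuous_const.mul continuous_id).neg.div_const y)).mul
      (continuous_pow n)).aestronglyMeasurable).mul hIntT.1
  have hFeq : ∀ y : ℝ, 0 < y → fY y = F y := by
    intro y hy
    rw [hfY y hy, hFdef]
    congr 1
    rw [integral_eq_lintegral_of_nonneg_ae (hintnn y hy) (hintmeas y)]
    congr 1
    apply lintegral_congr_ae
    filter_upwards [hFTeq] with t ht
    simp only [ht]
  have hFnn : ∀ y : ℝ, 0 < y → 0 ≤ F y := by
    intro y hy
    apply mul_nonneg (mul_nonneg _ _) ENNReal.toReal_nonneg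
    · positivity
    · exact pow_nonneg (div_nonneg (Nat.cast_nonneg n) hy.le) _
  constructor
  · intro s hs
    -- the main density computation
    have key : P ((fun ω => (n:ℝ) * T ω / Γn ω) ⁻¹' s)
        = ∫⁻ y in s ∩ Ioi (0:ℝ), ENNReal.ofReal (F y) := by
      set A : Set (ℝ × ℝ) := {p | (n:ℝ) * p.1 / p.2 ∈ s} with hAdef
      have hA : MeasurableSet A := ((measurable_const.mul measurable_fst).div measurable_snd) hs
      have e1 : P ((fun ω => (n:ℝ) * T ω / Γn ω) ⁻¹' s)
          = (P.map (fun ω => (T ω, Γn ω))) A := by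
        rw [Measure.map_apply (hT.prodMk hΓn) hA]; rfl
      rw [e1, hjoint, Measure.prod_apply hA]
      have hae : ∀ᵐ t ∂(P.map T), t ∈ Ioi (0:ℝ) := by
        have hz : (P.map T) (Ioi (0:ℝ))ᶜ = 0 := by
          rw [hmapT, withDensity_apply _ measurableSet_Ioi.compl,
            Measure.restrict_restrict measurableSet_Ioi.compl, compl_inter_self,
            Measure.restrict_empty, lintegral_zero_measure]
        rw [ae_iff]
        exact hz
      have hslice : ∀ t : ℝ, t ∈ Ioi (0:ℝ) → (P.map Γn) (Prod.mk t ⁻¹' A)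
          = ∫⁻ y in s ∩ Ioi (0:ℝ),
              ENNReal.ofReal ((n:ℝ)*t/y^2) * ENNReal.ofReal (gam ((n:ℝ)*t/y)) := by
        intro t ht
        have ht0 : (0:ℝ) < t := ht
        have hnt : (0:ℝ) < (n:ℝ)*t := by positivity
        have hS : MeasurableSet (Prod.mk t ⁻¹' A) := measurable_prodMk_left hA
        rw [hmapG, withDensity_apply _ hS, Measure.restrict_restrict hS]
        have himg : (Prod.mk t ⁻¹' A) ∩ Ioi 0 = (fun y => (n:ℝ)*t/y) '' (s ∩ Ioi 0) := by
          ext x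
          simp only [mem_inter_iff, mem_image, mem_preimage, mem_setOf_eq, mem_Ioi, hAdef]
          constructor
          · rintro ⟨hxs, hx0⟩
            exact ⟨(n:ℝ)*t/x, ⟨hxs, by positivity⟩, by field_simp⟩
          · rintro ⟨y, ⟨hys, hy0⟩, rfl⟩
            constructor
            · have : (n:ℝ)*t/((n:ℝ)*t/y) = y := by field_simp
              rw [this]; exact hys
            · positivity
        have hderiv : ∀ y ∈ s ∩ Ioi (0:ℝ), HasDerivWithinAt (fun y => (n:ℝ)*t/y)
            (-((n:ℝ)*t/y^2)) (s ∩ Ioi (0:ℝ)) y := by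
          intro y hy
          have hy0 : y ≠ 0 := (mem_Ioi.1 hy.2).ne'
          have := (hasDerivAt_inv hy0).const_mul ((n:ℝ)*t)
          have h2 : HasDerivAt (fun y => (n:ℝ)*t/y) (-((n:ℝ)*t/y^2)) y := by
            rw [show (fun y => (n:ℝ)*t/y) = fun y => (n:ℝ)*t*y⁻¹ from funext fun y => div_eq_mul_inv _ _]
            exact this.congr_deriv (by ring)
          exact h2.hasDerivWithinAt
        have hinj : InjOn (fun y => (n:ℝ)*t/y) (s ∩ Ioi (0:ℝ)) := by
          intro y1 h1' y2 h2' h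
          have hy1 : y1 ≠ 0 := (mem_Ioi.1 h1'.2).ne'
          have hy2 : y2 ≠ 0 := (mem_Ioi.1 h2'.2).ne'
          field_simp at h
          exact h.symm
        rw [himg, _root_.lintegral_image_eq_lintegral_abs_deriv_mul (hs.inter measurableSet_Ioi)
          hderiv hinj]
        refine setLIntegral_congr_fun (hs.inter measurableSet_Ioi)
          (fun y hy => ?_)
        have hy0 : (0:ℝ) < y := hy.2
        have habs : |(-((n:ℝ)*t/y^2))| = (n:ℝ)*t/y^2 := by
          rw [abs_neg, abs_of_nonneg (by positivity)]
        rw [habs]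
      calc ∫⁻ t, (P.map Γn) (Prod.mk t ⁻¹' A) ∂(P.map T)
          = ∫⁻ t, (∫⁻ y in s ∩ Ioi (0:ℝ),
              ENNReal.ofReal ((n:ℝ)*t/y^2) * ENNReal.ofReal (gam ((n:ℝ)*t/y))) ∂(P.map T) :=
            lintegral_congr_ae (hae.mono hslice)
        _ = ∫⁻ t in Ioi (0:ℝ), ENNReal.ofReal (FT t) * ∫⁻ y in s ∩ Ioi (0:ℝ),
              ENNReal.ofReal ((n:ℝ)*t/y^2) * ENNReal.ofReal (gam ((n:ℝ)*t/y)) := by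
            rw [hmapT, lintegral_withDensity_eq_lintegral_mul _ hFTmeas.ennreal_ofReal]
            · rfl
            · exact Measurable.lintegral_prod_right' (f := fun p : ℝ × ℝ =>
                ENNReal.ofReal ((n:ℝ)*p.1/p.2^2) * ENNReal.ofReal (gam ((n:ℝ)*p.1/p.2)))
                ((ENNReal.measurable_ofReal.comp
                  (((measurable_const.mul measurable_fst)).div (measurable_snd.pow_const 2))).mul
                 (ENNReal.measurable_ofReal.comp (hgamcont.measurable.comp
                  ((measurable_const.mul measurable_fst).div measurable_snd))))
        _ = ∫⁻ t in Ioi (0:ℝ), ∫⁻ y in s ∩ Ioi (0:ℝ), ENNReal.ofReal (FT t) *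
              (ENNReal.ofReal ((n:ℝ)*t/y^2) * ENNReal.ofReal (gam ((n:ℝ)*t/y))) := by
            refine lintegral_congr fun t => ?_
            exact (lintegral_const_mul' _ _ ENNReal.ofReal_ne_top).symm
        _ = ∫⁻ y in s ∩ Ioi (0:ℝ), ∫⁻ t in Ioi (0:ℝ), ENNReal.ofReal (FT t) *
              (ENNReal.ofReal ((n:ℝ)*t/y^2) * ENNReal.ofReal (gam ((n:ℝ)*t/y))) := by
            apply lintegral_lintegral_swap
            apply Measurable.aemeasurable
            exact ((ENNReal.measurable_ofReal.comp (hFTmeas.comp measurable_fst)).mul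
              ((ENNReal.measurable_ofReal.comp
                (((measurable_const.mul measurable_fst)).div (measurable_snd.pow_const 2))).mul
               (ENNReal.measurable_ofReal.comp (hgamcont.measurable.comp
                ((measurable_const.mul measurable_fst).div measurable_snd)))))
        _ = ∫⁻ y in s ∩ Ioi (0:ℝ), ENNReal.ofReal (F y) := by
            refine setLIntegral_congr_fun (hs.inter measurableSet_Ioi)
              (fun y hy => ?_)
            have hy0 : (0:ℝ) < y := hy.2
            have hc : (0:ℝ) ≤ 1 / Real.Gamma ((n:ℝ) + 1) * ((n:ℝ)/y)^(n+1) := by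
              have := Real.Gamma_pos_of_pos (show (0:ℝ) < (n:ℝ)+1 by positivity)
              positivity
            have hpt : ∀ᵐ t ∂(volume.restrict (Ioi (0:ℝ))),
                ENNReal.ofReal (FT t) *
                  (ENNReal.ofReal ((n:ℝ)*t/y^2) * ENNReal.ofReal (gam ((n:ℝ)*t/y)))
                = ENNReal.ofReal (1 / Real.Gamma ((n:ℝ) + 1) * ((n:ℝ)/y)^(n+1)) *
                    ENNReal.ofReal (Real.exp (-((n:ℝ)*t)/y) * t^n * FT t) := by
              filter_upwards [hFTnn, ae_restrict_mem measurableSet_Ioi] with t htnn ht0'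
              have ht0 : (0:ℝ) < t := ht0'
              rw [← ENNReal.ofReal_mul (by positivity : (0:ℝ) ≤ (n:ℝ)*t/y^2),
                ← ENNReal.ofReal_mul htnn, ← ENNReal.ofReal_mul hc]
              congr 1
              exact density_algebra m ht0 hy0 (FT t)
            rw [lintegral_congr_ae hpt, lintegral_const_mul' _ _ ENNReal.ofReal_ne_top]
            have hL : (∫⁻ t in Ioi (0:ℝ),
                ENNReal.ofReal (Real.exp (-((n:ℝ)*t)/y) * t^n * FT t))
                = ENNReal.ofReal (∫ t in Ioi (0:ℝ), Real.exp (-((n:ℝ)*t)/y) * t^n * fT t) := by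
              rw [ofReal_integral_eq_lintegral_ofReal ?hi (hintnn y hy0)]
              · apply lintegral_congr_ae
                filter_upwards [hFTeq] with t ht
                simp only [ht]
              case hi =>
                have hcpos : (0:ℝ) < (n:ℝ)/y := by positivity
                have := lap_integrable hIntT n hcpos
                have harg2 : ∀ t : ℝ, -(((n:ℝ)/y) * t) = -((n:ℝ)*t)/y := fun t => by ring
                simp only [harg2] at this; exact this
            rw [hL, ← ENNReal.ofReal_mul hc]
            congr 1
            have hFy : F y = (1 / Real.Gamma ((n:ℝ) + 1) * ((n:ℝ)/y)^(n+1)) *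
                ∫ t in Ioi (0:ℝ), Real.exp (-((n:ℝ)*t)/y) * t^n * fT t := by
              simp only [hFdef]
              rw [hL, ENNReal.toReal_ofReal (integral_nonneg_of_ae (hintnn y hy0))]
            rw [hFy]
    rw [key]
    rw [integral_eq_lintegral_of_nonneg_ae ?hnn ?hm]
    · apply congrArg
      refine setLIntegral_congr_fun (hs.inter measurableSet_Ioi) ?_
      exact fun y hy => by simp only [hFeq y hy.2]
    case hnn =>
      filter_upwards [ae_restrict_mem (hs.inter measurableSet_Ioi)] with y hy
      rw [hFeq y hy.2]; exact hFnn y hy.2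
    case hm =>
      refine (hFmeas.aestronglyMeasurable).congr ?_
      filter_upwards [ae_restrict_mem (hs.inter measurableSet_Ioi)] with y hy
      exact (hFeq y hy.2).symm
  · intro y hy
    have hlam : 0 < (n:ℝ) / y := by positivity
    have hid := lap_iteratedDeriv hIntT hφ n ((n:ℝ)/y) hlam
    rw [hid, hfY y hy]
    have harg : ∀ t : ℝ, -(((n:ℝ)/y) * t) = -((n:ℝ) * t) / y := fun t => by ring
    simp_rw [harg]
    rw [Real.Gamma_nat_eq_factorial]
    have hsq : ((-1:ℝ))^n * (-1)^n = 1 := by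
      rw [← pow_add, ← two_mul, pow_mul]; norm_num
    rw [show ((-1:ℝ))^n / n.factorial * ((n:ℝ)/y) ^ (n+1) *
        ((-1)^n * ∫ t in Ioi (0:ℝ), Real.exp (-((n:ℝ) * t) / y) * t ^ n * fT t)
      = ((-1:ℝ)^n * (-1)^n) * (1 / n.factorial * ((n:ℝ)/y) ^ (n+1) *
        ∫ t in Ioi (0:ℝ), Real.exp (-((n:ℝ) * t) / y) * t ^ n * fT t) from by ring, hsq, one_mul]
end

section
/- Let (m_j)_{1≤j≤n} be nonnegative integers with Σ_j j·m_j = n. Under the Ewens sampling formula with parameter θ > 0, P(|Π_{j,n}| = m_j, 1 ≤ j ≤ n) = n!/(∏_{i=1}^n (θ+i-1)) · ∏_{j=1}^n (θ/j)^{m_j} / m_j!, and these probabilities sum to 1 over all such vectors (m_1,…,m_n). -/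
open Finset

private def A (n k : ℕ) : Finset (Fin n → ℕ) :=
  (Fintype.piFinset fun _ => Finset.range (n+1)).filter (fun m => ∑ j, (j.1+1) * m j = k)

private noncomputable def w (θ : ℝ) {n : ℕ} (m : Fin n → ℕ) : ℝ :=
  ∏ j, (θ / (j.1+1)) ^ (m j) / ((m j).factorial : ℝ)

private lemma mem_A {n k : ℕ} {m : Fin n → ℕ} :
    m ∈ A n k ↔ (∀ j, m j < n + 1) ∧ ∑ j, (j.1+1) * m j = k := by
  simp [A, Fintype.mem_piFinset]

private noncomputable def T (θ : ℝ) (n k : ℕ) : ℝ := ∑ m ∈ A n k, w θ m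

private lemma inner (θ : ℝ) {n k : ℕ} (hk : k ≤ n) (j : Fin n) :
    ∑ m ∈ A n k, ((j.1+1) * m j : ℕ) * w θ m
      = θ * (if j.1+1 ≤ k then T θ n (k-(j.1+1)) else 0) := by
  by_cases hj : j.1 + 1 ≤ k
  · rw [if_pos hj, T, Finset.mul_sum,
      ← Finset.sum_filter_of_ne (p := fun m => m j ≠ 0)
        (by intro m _ h hmj; apply h; simp [hmj])]
    refine Finset.sum_bij' (fun m _ => Function.update m j (m j - 1))
      (fun m _ => Function.update m j (m j + 1)) ?_ ?_ ?_ ?_ ?_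
    · -- membership forward
      intro m hm
      simp only [mem_filter, mem_A] at hm ⊢
      obtain ⟨⟨hlt, hsum⟩, hne⟩ := hm
      refine ⟨fun t => ?_, ?_⟩
      · rcases eq_or_ne t j with rfl | h
        · simp only [Function.update_self]; exact lt_of_le_of_lt (Nat.sub_le _ _) (hlt t)
        · simp only [Function.update_of_ne h]; exact hlt t
      · rw [Finset.sum_eq_add_sum_sdiff_singleton_of_mem (mem_univ j)] at hsum ⊢
        have h1 : m j - 1 + 1 = m j := Nat.succ_pred_eq_of_pos (Nat.pos_of_ne_zero hne)
        have h2 : ∀ t ∈ univ \ {j}, (t.1+1) * Function.update m j (m j - 1) t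
            = (t.1+1) * m t := by
          intro t ht
          simp only [mem_sdiff, mem_singleton] at ht
          rw [Function.update_of_ne ht.2]
        rw [Finset.sum_congr rfl h2, Function.update_self]
        have h3 : (j.1+1) * (m j - 1) + (j.1+1) = (j.1+1) * m j := by
          rw [← Nat.mul_succ, Nat.succ_eq_add_one, h1]
        omega
    · -- membership backward
      intro m hm
      simp only [mem_filter, mem_A] at hm ⊢
      obtain ⟨hlt, hsum⟩ := hm
      have hle : (j.1+1) * m j ≤ k - (j.1+1) := hsum ▸ Finset.single_le_sum
        (f := fun t => (t.1+1) * m t) (fun t _ => Nat.zero_le _) (mem_univ j)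
      have hmj : m j + 1 ≤ n := by
        calc m j + 1 ≤ (j.1+1) * (m j + 1) := Nat.le_mul_of_pos_left _ (Nat.succ_pos _)
        _ = (j.1+1) * m j + (j.1+1) := by ring
        _ ≤ k := by omega
        _ ≤ n := hk
      refine ⟨⟨fun t => ?_, ?_⟩, by simp⟩
      · rcases eq_or_ne t j with rfl | h
        · simpa using Nat.lt_succ_of_le hmj
        · simp only [Function.update_of_ne h]; exact hlt t
      · rw [Finset.sum_eq_add_sum_sdiff_singleton_of_mem (mem_univ j)] at hsum ⊢
        have h2 : ∀ t ∈ univ \ {j}, (t.1+1) * Function.update m j (m j + 1) t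
            = (t.1+1) * m t := by
          intro t ht
          simp only [mem_sdiff, mem_singleton] at ht
          rw [Function.update_of_ne ht.2]
        rw [Finset.sum_congr rfl h2, Function.update_self, Nat.mul_succ]
        omega
    · -- left inverse
      intro m hm
      simp only [mem_filter] at hm
      funext t
      rcases eq_or_ne t j with rfl | h
      · have := Nat.pos_of_ne_zero hm.2
        simp only [Function.update_self]
        omega
      · simp [Function.update_of_ne h]
    · -- right inverse
      intro m _
      funext t
      rcases eq_or_ne t j with rfl | h
      · simp
      · simp [Function.update_of_ne h]
    · -- term equality
      intro m hm
      simp only [mem_filter] at hm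
      have hne := hm.2
      rw [w, w, ← Finset.mul_prod_erase univ _ (mem_univ j),
        ← Finset.mul_prod_erase univ
          (fun t => (θ / (t.1+1)) ^ (Function.update m j (m j - 1) t)
            / ((Function.update m j (m j - 1) t).factorial : ℝ)) (mem_univ j)]
      have h2 : ∀ t ∈ univ.erase j,
          (θ / (t.1+1)) ^ (Function.update m j (m j - 1) t)
            / ((Function.update m j (m j - 1) t).factorial : ℝ)
          = (θ / (t.1+1)) ^ (m t) / ((m t).factorial : ℝ) := by
        intro t ht
        rw [Function.update_of_ne (Finset.ne_of_mem_erase ht)]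
      rw [Finset.prod_congr rfl h2, Function.update_self]
      obtain ⟨d, hd⟩ : ∃ d, m j = d + 1 := ⟨m j - 1, (Nat.succ_pred_eq_of_pos (Nat.pos_of_ne_zero hne)).symm⟩
      rw [hd]
      simp only [Nat.add_sub_cancel, Nat.factorial_succ]
      push_cast
      rw [pow_succ]
      have hj1 : (j.1:ℝ) + 1 ≠ 0 := by positivity
      have hfac : ((d.factorial : ℝ)) ≠ 0 := Nat.cast_ne_zero.2 d.factorial_ne_zero
      field_simp
  · rw [if_neg hj, mul_zero]
    apply Finset.sum_eq_zero
    intro m hm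
    rw [mem_A] at hm
    have h1 : (j.1+1) * m j ≤ k := hm.2 ▸ Finset.single_le_sum
      (f := fun t => (t.1+1) * m t) (fun t _ => Nat.zero_le _) (mem_univ j)
    have : m j = 0 := by
      by_contra h
      exact hj (le_trans (Nat.le_mul_of_pos_right _ (Nat.pos_of_ne_zero h)) h1)
    simp [this]

private lemma rec_T (θ : ℝ) {n k : ℕ} (hk : k ≤ n) :
    (k:ℝ) * T θ n k = θ * ∑ i ∈ range k, T θ n i := by
  have step1 : (k:ℝ) * T θ n k
      = ∑ j : Fin n, ∑ m ∈ A n k, ((j.1+1) * m j : ℕ) * w θ m := by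
    rw [Finset.sum_comm, T, Finset.mul_sum]
    apply Finset.sum_congr rfl
    intro m hm
    rw [← Finset.sum_mul, ← Nat.cast_sum]
    congr 2
    exact (mem_A.1 hm).2.symm
  rw [step1]
  have step2 : ∀ j : Fin n, ∑ m ∈ A n k, ((j.1+1) * m j : ℕ) * w θ m
      = θ * (if j.1+1 ≤ k then T θ n (k-(j.1+1)) else 0) := fun j => inner θ hk j
  rw [Finset.sum_congr rfl (fun j _ => step2 j), ← Finset.mul_sum]
  congr 1
  rw [Finset.sum_ite, Finset.sum_const_zero, add_zero]
  refine Finset.sum_bij' (fun j _ => k - (j.1+1))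
    (fun i hi => (⟨k - (i+1), by simp only [mem_range] at hi; omega⟩ : Fin n)) ?_ ?_ ?_ ?_ ?_
  · intro j hj
    simp only [mem_filter, mem_univ, true_and] at hj
    simp only [mem_range]
    omega
  · intro i hi
    simp only [mem_range] at hi
    simp only [mem_filter, mem_univ, true_and]
    omega
  · intro j hj
    simp only [mem_filter, mem_univ, true_and] at hj
    ext
    simp only
    omega
  · intro i hi
    simp only [mem_range] at hi
    simp only
    omega
  · intro j _
    rfl

private lemma main_T (θ : ℝ) {n : ℕ} : ∀ k ≤ n, (k.factorial : ℝ) * T θ n k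
    = ∏ i ∈ range k, (θ + i) := by
  intro k
  induction k with
  | zero =>
    intro _
    have : A n 0 = {fun _ => 0} := by
      ext m
      simp only [mem_A, mem_singleton]
      constructor
      · rintro ⟨h1, h2⟩
        funext j
        have := (Finset.sum_eq_zero_iff_of_nonneg (fun i _ => Nat.zero_le _)).1 h2 j (mem_univ j)
        rcases Nat.mul_eq_zero.1 this with h | h
        · omega
        · exact h
      · rintro rfl; exact ⟨fun j => Nat.succ_pos n, by simp⟩
    simp [T, this, w]
  | succ k ih =>
    intro hk1
    have hk : k ≤ n := Nat.le_of_succ_le hk1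
    have r1 := rec_T θ (n := n) (k := k+1) hk1
    have r2 := rec_T θ (n := n) (k := k) hk
    rw [Finset.sum_range_succ, mul_add, ← r2] at r1
    have key : ((k:ℝ)+1) * T θ n (k+1) = (θ + k) * T θ n k := by
      push_cast at r1 ⊢
      linarith [r1]
    rw [Finset.prod_range_succ, ← ih hk]
    have : ((k+1).factorial : ℝ) = (k.factorial : ℝ) * ((k:ℝ)+1) := by
      rw [Nat.factorial_succ]; push_cast; ring
    rw [this, mul_assoc, key]
    ring

/-- Ewens sampling formula: the probabilities
`n!/(∏_{i=1}^n (θ+i-1)) ∏_{j=1}^n (θ/j)^{m_j}/m_j!` over all vectors `(m_1,…,m_n)` of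
nonnegative integers with `Σ_j j m_j = n` sum to one; equivalently
`Σ_{(m_j) : Σ j m_j = n} n! ∏_j (θ/j)^{m_j}/m_j! = ∏_{i=1}^n (θ+i-1)`. -/
theorem ewens_sampling_formula_sums_to_one (θ : ℝ) (hθ : 0 < θ) (n : ℕ) (hn : 0 < n) :
    ∑ m ∈ (Finset.univ : Finset (Fin n → Fin (n + 1))).filter
        (fun m => ∑ j : Fin n, (j.1 + 1) * (m j).1 = n),
      (n.factorial : ℝ) *
        ∏ j : Fin n, (θ / (j.1 + 1)) ^ (m j).1 / ((m j).1.factorial : ℝ) =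
      ∏ i ∈ Finset.range n, (θ + i) := by
  rw [← Finset.mul_sum]
  have hS : ∑ m ∈ (Finset.univ : Finset (Fin n → Fin (n + 1))).filter
        (fun m => ∑ j : Fin n, (j.1 + 1) * (m j).1 = n),
      ∏ j : Fin n, (θ / (j.1 + 1)) ^ (m j).1 / ((m j).1.factorial : ℝ) = T θ n n := by
    rw [T]
    refine Finset.sum_bij' (fun m _ => fun t => (m t).1)
      (fun m hm => fun t => (⟨m t, (mem_A.1 hm).1 t⟩ : Fin (n+1))) ?_ ?_ ?_ ?_ ?_
    · intro m hm
      simp only [mem_filter, mem_univ, true_and] at hm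
      exact mem_A.2 ⟨fun t => (m t).2, hm⟩
    · intro m hm
      simp only [mem_filter, mem_univ, true_and]
      exact (mem_A.1 hm).2
    · intro m _; rfl
    · intro m _; rfl
    · intro m _; rfl
  rw [hS, main_T θ n le_rfl]
end

section
/- For θ > 0 and a partition p = {C_1,…,C_k} of {1,…,n} with block sizes e_1,…,e_k, define PD(p|θ) = θ^k ∏_{j=1}^k (e_j - 1)! / ∏_{i=1}^n (θ+i-1). Then Σ_p PD(p|θ) = 1, where the sum is over all partitions of {1,…,n}. -/
open Finset

section CRP

variable {α : Type*} [DecidableEq α]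

/-- The set of set partitions of the finset `s`. -/
def crpParts (s : Finset α) : Finset (Finset (Finset α)) :=
  (s.powerset.powerset).filter (fun p => (∅ : Finset α) ∉ p ∧
    (∀ A ∈ p, ∀ B ∈ p, A ≠ B → Disjoint A B) ∧ p.sup id = s)

lemma mem_crpParts {s : Finset α} {p : Finset (Finset α)} :
    p ∈ crpParts s ↔ (∅ : Finset α) ∉ p ∧
      (∀ A ∈ p, ∀ B ∈ p, A ≠ B → Disjoint A B) ∧ p.sup id = s := by
  simp only [crpParts, mem_filter, mem_powerset, and_iff_right_iff_imp]
  rintro ⟨-, -, h⟩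
  intro A hA
  simp only [mem_powerset]
  calc A = id A := rfl
  _ ≤ p.sup id := le_sup hA
  _ = s := h

/-- The weight of a partition. -/
noncomputable def crpW (θ : ℝ) (p : Finset (Finset α)) : ℝ :=
  θ ^ p.card * ∏ A ∈ p, ((A.card - 1).factorial : ℝ)


lemma crp_block_subset {s : Finset α} {p : Finset (Finset α)} (hp : p ∈ crpParts s)
    {A : Finset α} (hA : A ∈ p) : A ⊆ s := by
  rw [mem_crpParts] at hp
  have : (id A : Finset α) ≤ p.sup id := le_sup hA
  rwa [hp.2.2] at this

lemma crp_block_nonempty {s : Finset α} {p : Finset (Finset α)} (hp : p ∈ crpParts s)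
    {A : Finset α} (hA : A ∈ p) : A.Nonempty := by
  rw [mem_crpParts] at hp
  rcases Finset.eq_empty_or_nonempty A with rfl | h
  · exact absurd hA hp.1
  · exact h

lemma crpA (θ : ℝ) {a : α} {s : Finset α} (ha : a ∉ s) :
    ∑ p ∈ (crpParts (insert a s)).filter (fun p => ({a} : Finset α) ∈ p), crpW θ p
      = θ * ∑ q ∈ crpParts s, crpW θ q := by
  classical
  rw [Finset.mul_sum]
  refine Finset.sum_bij' (fun p _ => p.erase {a}) (fun q _ => insert ({a} : Finset α) q)
    ?_ ?_ ?_ ?_ ?_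
  · -- hi : erase lands in crpParts s
    intro p hp
    rw [Finset.mem_filter] at hp
    obtain ⟨hp, hap⟩ := hp
    have hmem := mem_crpParts.mp hp
    rw [mem_crpParts]
    refine ⟨fun h => hmem.1 (Finset.mem_of_mem_erase h),
      fun A hA B hB hAB => hmem.2.1 A (Finset.mem_of_mem_erase hA) B (Finset.mem_of_mem_erase hB) hAB, ?_⟩
    apply le_antisymm
    · rw [Finset.sup_le_iff]
      intro A hA
      have hAp := Finset.mem_of_mem_erase hA
      have h1 : A ⊆ insert a s := crp_block_subset hp hAp
      have h2 : a ∉ A := by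
        intro haA
        have hd := hmem.2.1 A hAp {a} hap (Finset.ne_of_mem_erase hA)
        exact Finset.disjoint_left.mp hd haA (Finset.mem_singleton_self a)
      intro x hx
      rcases Finset.mem_insert.mp (h1 hx) with rfl | hxs
      · exact absurd hx h2
      · exact hxs
    · intro x hxs
      have hx : x ∈ (insert a s : Finset α) := Finset.mem_insert_of_mem hxs
      rw [← hmem.2.2, Finset.mem_sup] at hx
      obtain ⟨A, hAp, hxA⟩ := hx
      have hAne : A ≠ {a} := by
        rintro rfl
        have hxa : x = a := Finset.mem_singleton.mp hxA
        exact ha (hxa ▸ hxs)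
      rw [Finset.mem_sup]
      exact ⟨A, Finset.mem_erase.mpr ⟨hAne, hAp⟩, hxA⟩
  · -- hj
    intro q hq
    have hmem := mem_crpParts.mp hq
    have haq : ({a} : Finset α) ∉ q := by
      intro h
      exact ha (crp_block_subset hq h (Finset.mem_singleton_self a))
    rw [Finset.mem_filter, mem_crpParts]
    refine ⟨⟨?_, ?_, ?_⟩, Finset.mem_insert_self _ _⟩
    · intro h
      rcases Finset.mem_insert.mp h with h | h
      · exact Finset.singleton_ne_empty a h.symm
      · exact hmem.1 h
    · intro A hA B hB hAB
      rcases Finset.mem_insert.mp hA with rfl | hA <;>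
        rcases Finset.mem_insert.mp hB with rfl | hB
      · exact absurd rfl hAB
      · rw [Finset.disjoint_singleton_left]
        exact fun h => ha (crp_block_subset hq hB h)
      · rw [Finset.disjoint_singleton_right]
        exact fun h => ha (crp_block_subset hq hA h)
      · exact hmem.2.1 A hA B hB hAB
    · rw [Finset.sup_insert, hmem.2.2]
      rfl
  · -- left_inv
    intro p hp
    rw [Finset.mem_filter] at hp
    exact Finset.insert_erase hp.2
  · -- right_inv
    intro q hq
    apply Finset.erase_insert
    intro h
    exact ha (crp_block_subset hq h (Finset.mem_singleton_self a))
  · -- weights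
    intro p hp
    rw [Finset.mem_filter] at hp
    obtain ⟨hp, hap⟩ := hp
    unfold crpW
    rw [← Finset.mul_prod_erase p _ hap, Finset.card_erase_of_mem hap]
    have hcard : 0 < p.card := Finset.card_pos.mpr ⟨_, hap⟩
    rw [show p.card = (p.card - 1) + 1 from (Nat.succ_pred_eq_of_pos hcard).symm, pow_succ]
    simp [Nat.factorial]
    ring



lemma crpB_facts {a : α} {s : Finset α} {p : Finset (Finset α)}
    (hp : p ∈ crpParts (insert a s)) (hap : ({a} : Finset α) ∉ p)
    {B : Finset α} (hBp : B ∈ p) (haB : a ∈ B) :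
    (B.erase a).Nonempty ∧ B.erase a ∉ p.erase B := by
  have hmem := mem_crpParts.mp hp
  have hBa : B ≠ {a} := fun h => hap (h ▸ hBp)
  have hBerne : (B.erase a).Nonempty := by
    rw [Finset.nonempty_iff_ne_empty]
    intro h
    rcases (Finset.erase_eq_empty_iff B a).mp h with h' | h'
    · exact hmem.1 (h' ▸ hBp)
    · exact hBa h'
  refine ⟨hBerne, ?_⟩
  intro h
  have hne : B.erase a ≠ B := fun h' => (h' ▸ Finset.notMem_erase a B) haB
  have hd := hmem.2.1 _ (Finset.mem_of_mem_erase h) B hBp hne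
  obtain ⟨x, hx⟩ := hBerne
  exact Finset.disjoint_left.mp hd hx (Finset.mem_of_mem_erase hx)

lemma crpB_erase_part {a : α} {s : Finset α} (ha : a ∉ s) {p : Finset (Finset α)}
    (hp : p ∈ crpParts (insert a s)) (hap : ({a} : Finset α) ∉ p)
    {B : Finset α} (hBp : B ∈ p) (haB : a ∈ B) :
    insert (B.erase a) (p.erase B) ∈ crpParts s := by
  have hmem := mem_crpParts.mp hp
  obtain ⟨hBerne, hBenot⟩ := crpB_facts hp hap hBp haB
  rw [mem_crpParts]
  refine ⟨?_, ?_, ?_⟩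
  · intro h
    rcases Finset.mem_insert.mp h with h | h
    · exact Finset.nonempty_iff_ne_empty.mp hBerne h.symm
    · exact hmem.1 (Finset.mem_of_mem_erase h)
  · intro X hX Y hY hXY
    rcases Finset.mem_insert.mp hX with rfl | hX <;>
      rcases Finset.mem_insert.mp hY with rfl | hY
    · exact absurd rfl hXY
    · exact Finset.disjoint_of_subset_left (Finset.erase_subset a B)
        (hmem.2.1 B hBp Y (Finset.mem_of_mem_erase hY) (Finset.ne_of_mem_erase hY).symm)
    · exact Finset.disjoint_of_subset_right (Finset.erase_subset a B)
        (hmem.2.1 X (Finset.mem_of_mem_erase hX) B hBp (Finset.ne_of_mem_erase hX))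
    · exact hmem.2.1 X (Finset.mem_of_mem_erase hX) Y (Finset.mem_of_mem_erase hY) hXY
  · have hanotsup : a ∉ (p.erase B).sup id := by
      rw [Finset.mem_sup]
      rintro ⟨A, hA, haA⟩
      exact Finset.disjoint_left.mp
        (hmem.2.1 A (Finset.mem_of_mem_erase hA) B hBp (Finset.ne_of_mem_erase hA))
        haA haB
    have hsupp : B ⊔ (p.erase B).sup id = insert a s := by
      have h1 : (insert B (p.erase B)).sup id = insert a s := by
        rw [Finset.insert_erase hBp, hmem.2.2]
      rw [Finset.sup_insert] at h1
      simpa using h1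
    rw [Finset.sup_insert]
    simp only [id_eq, Finset.sup_eq_union] at hsupp ⊢
    rw [← Finset.erase_insert ha, ← hsupp, Finset.erase_union_distrib,
      Finset.erase_eq_of_notMem hanotsup]

lemma crpB_insert_part {a : α} {s : Finset α} (ha : a ∉ s) {q : Finset (Finset α)}
    (hq : q ∈ crpParts s) {C : Finset α} (hC : C ∈ q) :
    insert (insert a C) (q.erase C) ∈
      (crpParts (insert a s)).filter (fun p => ({a} : Finset α) ∉ p) := by
  have hmem := mem_crpParts.mp hq
  have hCs : C ⊆ s := crp_block_subset hq hC
  have haC : a ∉ C := fun h => ha (hCs h)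
  have hCne : C.Nonempty := crp_block_nonempty hq hC
  rw [Finset.mem_filter, mem_crpParts]
  refine ⟨⟨?_, ?_, ?_⟩, ?_⟩
  · intro h
    rcases Finset.mem_insert.mp h with h | h
    · exact (Finset.insert_nonempty a C).ne_empty h.symm
    · exact hmem.1 (Finset.mem_of_mem_erase h)
  · intro X hX Y hY hXY
    rcases Finset.mem_insert.mp hX with rfl | hX <;>
      rcases Finset.mem_insert.mp hY with rfl | hY
    · exact absurd rfl hXY
    · have hd := hmem.2.1 C hC Y (Finset.mem_of_mem_erase hY)
        (Finset.ne_of_mem_erase hY).symm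
      rw [Finset.insert_eq, Finset.disjoint_union_left, Finset.disjoint_singleton_left]
      exact ⟨fun h => ha (crp_block_subset hq (Finset.mem_of_mem_erase hY) h), hd⟩
    · have hd := hmem.2.1 X (Finset.mem_of_mem_erase hX) C hC (Finset.ne_of_mem_erase hX)
      rw [Finset.insert_eq, Finset.disjoint_union_right, Finset.disjoint_singleton_right]
      exact ⟨fun h => ha (crp_block_subset hq (Finset.mem_of_mem_erase hX) h), hd⟩
    · exact hmem.2.1 X (Finset.mem_of_mem_erase hX) Y (Finset.mem_of_mem_erase hY) hXY
  · have hq' : C ⊔ (q.erase C).sup id = s := by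
      have h1 : (insert C (q.erase C)).sup id = s := by
        rw [Finset.insert_erase hC, hmem.2.2]
      rw [Finset.sup_insert] at h1
      simpa using h1
    rw [Finset.sup_insert]
    simp only [id_eq, Finset.sup_eq_union] at hq' ⊢
    rw [Finset.insert_union, hq']
  · intro h
    rcases Finset.mem_insert.mp h with h | h
    · obtain ⟨x, hx⟩ := hCne
      have hxa : x ∈ ({a} : Finset α) := h ▸ Finset.mem_insert_of_mem hx
      exact haC ((Finset.mem_singleton.mp hxa) ▸ hx)
    · exact ha (crp_block_subset hq (Finset.mem_of_mem_erase h) (Finset.mem_singleton_self a))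

lemma crpB_weight (θ : ℝ) {a : α} {s : Finset α} (ha : a ∉ s) {q : Finset (Finset α)}
    (hq : q ∈ crpParts s) {C : Finset α} (hC : C ∈ q) :
    crpW θ (insert (insert a C) (q.erase C)) = crpW θ q * (C.card : ℝ) := by
  have hCs : C ⊆ s := crp_block_subset hq hC
  have haC : a ∉ C := fun h => ha (hCs h)
  have hCne : C.Nonempty := crp_block_nonempty hq hC
  have hInotqe : insert a C ∉ q.erase C := fun h =>
    ha (crp_block_subset hq (Finset.mem_of_mem_erase h) (Finset.mem_insert_self a C))
  have hqcard : 0 < q.card := Finset.card_pos.mpr ⟨C, hC⟩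
  unfold crpW
  rw [Finset.card_insert_of_notMem hInotqe, Finset.card_erase_of_mem hC,
    Finset.prod_insert hInotqe, Finset.card_insert_of_notMem haC,
    ← Finset.mul_prod_erase q _ hC, Nat.succ_sub_one, Nat.sub_one_add_one hqcard.ne']
  have hfac : (C.card.factorial : ℝ) = (C.card : ℝ) * ((C.card - 1).factorial : ℝ) := by
    rw [← Nat.cast_mul, Nat.mul_factorial_pred (Finset.card_pos.mpr hCne).ne']
  rw [hfac]
  ring

lemma crpB (θ : ℝ) {a : α} {s : Finset α} (ha : a ∉ s) :
    ∑ p ∈ (crpParts (insert a s)).filter (fun p => ({a} : Finset α) ∉ p), crpW θ p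
      = (s.card : ℝ) * ∑ q ∈ crpParts s, crpW θ q := by
  classical
  have hexu : ∀ p ∈ (crpParts (insert a s)).filter (fun p => ({a} : Finset α) ∉ p),
      ∃! B, B ∈ p ∧ a ∈ B := by
    intro p hp
    rw [Finset.mem_filter] at hp
    have hmem := mem_crpParts.mp hp.1
    have hsup : a ∈ p.sup id := by
      rw [hmem.2.2]; exact Finset.mem_insert_self a s
    rw [Finset.mem_sup] at hsup
    obtain ⟨B, hB, haB⟩ := hsup
    refine ⟨B, ⟨hB, haB⟩, ?_⟩
    rintro B' ⟨hB', haB'⟩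
    by_contra hne
    exact Finset.disjoint_left.mp (hmem.2.1 B' hB' B hB hne) haB' haB
  have key : ∑ x ∈ (crpParts s).sigma (fun q => q), crpW θ x.1 * (x.2.card : ℝ)
      = ∑ p ∈ (crpParts (insert a s)).filter (fun p => ({a} : Finset α) ∉ p), crpW θ p := by
    refine Finset.sum_bij'
      (fun x _ => insert (insert a x.2) (x.1.erase x.2))
      (fun p hp =>
        ⟨insert ((p.choose (a ∈ ·) (hexu p hp)).erase a)
          (p.erase (p.choose (a ∈ ·) (hexu p hp))),
          (p.choose (a ∈ ·) (hexu p hp)).erase a⟩) ?_ ?_ ?_ ?_ ?_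
    · -- hi : lands in filter set
      rintro ⟨q, C⟩ hx
      rw [Finset.mem_sigma] at hx
      exact crpB_insert_part ha hx.1 hx.2
    · -- hj : lands in sigma set
      intro p hp
      have hBp : p.choose (a ∈ ·) (hexu p hp) ∈ p := Finset.choose_mem _ _ _
      have haB : a ∈ p.choose (a ∈ ·) (hexu p hp) :=
        Finset.choose_property (a ∈ ·) p (hexu p hp)
      rw [Finset.mem_filter] at hp
      rw [Finset.mem_sigma]
      exact ⟨crpB_erase_part ha hp.1 hp.2 hBp haB, Finset.mem_insert_self _ _⟩
    · -- left_inv : j (i x) = x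
      rintro ⟨q, C⟩ hx
      rw [Finset.mem_sigma] at hx
      obtain ⟨hq, hC⟩ := hx
      have hCs : C ⊆ s := crp_block_subset hq hC
      have haC : a ∉ C := fun h => ha (hCs h)
      have hInotqe : insert a C ∉ q.erase C := fun h =>
        ha (crp_block_subset hq (Finset.mem_of_mem_erase h) (Finset.mem_insert_self a C))
      set p := insert (insert a C) (q.erase C) with hpdef
      have hp : p ∈ (crpParts (insert a s)).filter (fun p => ({a} : Finset α) ∉ p) :=
        crpB_insert_part ha hq hC
      have hchoose : p.choose (a ∈ ·) (hexu p hp) = insert a C := by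
        have h1 : p.choose (a ∈ ·) (hexu p hp) ∈ p ∧ a ∈ p.choose (a ∈ ·) (hexu p hp) :=
          ⟨Finset.choose_mem _ _ _, Finset.choose_property (a ∈ ·) p (hexu p hp)⟩
        exact (hexu p hp).unique h1 ⟨Finset.mem_insert_self _ _, Finset.mem_insert_self a C⟩
      simp only [hpdef] at hchoose
      simp only [hchoose]
      congr 1
      · rw [Finset.erase_insert haC, Finset.erase_insert hInotqe, Finset.insert_erase hC]
      · rw [Finset.erase_insert haC]
    · -- right_inv : i (j p) = p
      intro p hp
      have hBp : p.choose (a ∈ ·) (hexu p hp) ∈ p := Finset.choose_mem _ _ _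
      have haB : a ∈ p.choose (a ∈ ·) (hexu p hp) :=
        Finset.choose_property (a ∈ ·) p (hexu p hp)
      set B := p.choose (a ∈ ·) (hexu p hp) with hBdef
      rw [Finset.mem_filter] at hp
      obtain ⟨-, hBenot⟩ := crpB_facts hp.1 hp.2 hBp haB
      simp only
      rw [Finset.erase_insert hBenot, Finset.insert_erase haB, Finset.insert_erase hBp]
    · -- h : weights
      rintro ⟨q, C⟩ hx
      rw [Finset.mem_sigma] at hx
      exact (crpB_weight θ ha hx.1 hx.2).symm
  rw [← key, Finset.sum_sigma, Finset.mul_sum]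
  refine Finset.sum_congr rfl fun q hq => ?_
  have hmem := mem_crpParts.mp hq
  have h2 : s.card = ∑ C ∈ q, C.card := by
    have hb : s = q.biUnion id := by rw [← Finset.sup_eq_biUnion, hmem.2.2]
    rw [hb]
    exact Finset.card_biUnion (fun x hx y hy hxy => hmem.2.1 x hx y hy hxy)
  simp only
  rw [← Finset.mul_sum, ← Nat.cast_sum, ← h2, mul_comm]

lemma crp_key (θ : ℝ) (s : Finset α) :
    ∑ p ∈ crpParts s, crpW θ p = ∏ i ∈ Finset.range s.card, (θ + i) := by
  classical
  induction s using Finset.induction_on with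
  | empty =>
      have h : crpParts (∅ : Finset α) = {∅} := by
        ext p
        simp only [mem_crpParts, mem_singleton]
        constructor
        · rintro ⟨h0, -, hsup⟩
          ext A
          simp only [Finset.notMem_empty, iff_false]
          intro hA
          have : A ⊆ ∅ := by
            have : (id A : Finset α) ≤ p.sup id := le_sup hA
            rwa [hsup] at this
          exact h0 (by rwa [Finset.subset_empty.mp this] at hA)
        · rintro rfl
          simp
      simp [h, crpW]
  | @insert a s ha ih =>
      rw [Finset.card_insert_of_notMem ha, Finset.prod_range_succ, ← ih,
        ← Finset.sum_filter_add_sum_filter_not (crpParts (insert a s))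
          (fun p => ({a} : Finset α) ∈ p) (crpW θ), crpA θ ha, crpB θ ha]
      ring

end CRP

/-- The Chinese restaurant (Ewens/Pitman) partition distribution
`PD(p|θ) = θ^{|p|} ∏_j (e_j-1)! / ∏_{i=1}^n (θ+i-1)` sums to one over all set
partitions `p` of `{1,…,n}`. -/
theorem crp_eppf_sums_to_one (θ : ℝ) (hθ : 0 < θ) (n : ℕ) (hn : 0 < n) :
    ∑ p ∈ (Finset.univ : Finset (Finset (Finset (Fin n)))).filter
        (fun p => (∅ : Finset (Fin n)) ∉ p ∧
          (∀ A ∈ p, ∀ B ∈ p, A ≠ B → Disjoint A B) ∧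
          p.sup id = Finset.univ),
      θ ^ p.card * (∏ A ∈ p, ((A.card - 1).factorial : ℝ)) /
        ∏ i ∈ Finset.range n, (θ + i) = 1 := by
  have hset : (Finset.univ : Finset (Finset (Finset (Fin n)))).filter
        (fun p => (∅ : Finset (Fin n)) ∉ p ∧
          (∀ A ∈ p, ∀ B ∈ p, A ≠ B → Disjoint A B) ∧
          p.sup id = Finset.univ) = crpParts (Finset.univ : Finset (Fin n)) := by
    rw [crpParts, Finset.powerset_univ, Finset.powerset_univ]
    ext p
    simp only [Finset.mem_filter]
  have hprod : (0:ℝ) < ∏ i ∈ Finset.range n, (θ + i) := by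
    apply Finset.prod_pos
    intro i _
    positivity
  rw [hset, ← Finset.sum_div]
  have := crp_key θ (Finset.univ : Finset (Fin n))
  rw [Finset.card_univ, Fintype.card_fin] at this
  rw [show (∑ p ∈ crpParts (Finset.univ : Finset (Fin n)),
      θ ^ p.card * (∏ A ∈ p, ((A.card - 1).factorial : ℝ))) =
      ∑ p ∈ crpParts (Finset.univ : Finset (Fin n)), crpW θ p from rfl, this]
  exact div_self hprod.ne'
end
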